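/- arXiv:2209.12477 — 2 statements merged into one kernel-verified Lean document; each statement's English description precedes it below -/
import Mathlib

section
/- Let n ≥ 4. Define the shifted-addition high-bit function sAdd^n_{n−1} : (Fin n → Bool) × (Fin n → Bool) × Fin (n+1) → Bool by sAdd^n_{n−1}(A, B, D) = bit n−1 of (val A + (val B) / 2^D) (integer division, val as binary value with bit 0 least significant). Then for every subset L of the 2n operand variables (indices of A and B) with |L| = n, there exists a fooling set for sAdd^n_{n−1} with respect to the partition (L, Lᶜ) of size at least 2^{⌈n/4⌉ / 2} (in particular of size exponential in n). -/
def bitVal {n : ℕ} (w : Fin n → Bool) : ℕ := ∑ i, if w i then 2 ^ (i : ℕ) else 0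

def sAddHigh {n : ℕ} (A B : Fin n → Bool) (D : Fin (n + 1)) : Bool :=
  Nat.testBit (bitVal A + bitVal B / 2 ^ (D : ℕ)) (n - 1)

/-- combine a partial assignment on `L` with one on its complement into a full
assignment of the `2n` operand variables `(i, false) = a_i`, `(i, true) = b_i`. -/
def combine {n : ℕ} (L : Finset (Fin n × Bool))
    (l : {x // x ∈ L} → Bool) (r : {x // x ∈ Lᶜ} → Bool) (x : Fin n × Bool) : Bool :=
  if h : x ∈ L then l ⟨x, h⟩ else r ⟨x, Finset.mem_compl.mpr h⟩

/-!
Fix a shift `d` and call `i` a *split position* if `i < n - 1`, `i + d < n` and exactly one of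
`a_i`, `b_{i+d}` lies in `L`. Both bits land at weight `2^i` of `A + (B >> d)`. Label a subset
`U` of the split positions `S` by writing `i ∈ U` into the bit on the `L` side and `i ∉ U` into
the other one, and set all remaining bits of `A` below `n - 1` to one. Mixing the `L` half of
label `U` with the other half of label `V` then gives `A + (B >> d) = 2^(n-1) - 1 + N U - N V`
with `N U = ∑ i ∈ U, 2^i`, whose top bit is `N V < N U`: the `2^|S|` labels form a fooling set.

Some shift has `⌈n/4⌉/2` split positions. Either `d = 0` does, or few columns `i` have exactly
one of `a_i`, `b_i` in `L`; then about `n/2` columns have both and as many have neither, and each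
such pair of columns at distance `d` yields a split position for `d`. Pigeonhole over the `n - 1`
distances finishes the count.
-/

open Finset

def IsFoolingSet {α β γ : Type*} (g : α → β → γ) (𝒜 : Finset (α × β)) : Prop :=
  ∀ p ∈ 𝒜, ∀ q ∈ 𝒜, p ≠ q → g p.1 q.2 ≠ g q.1 p.2

section FoolingImage
variable {ι α β γ : Type*} {g : α → β → γ} {φ : ι → α × β} {I : Finset ι}

lemma injOn_of_distinguishes
    (h : ∀ u ∈ I, ∀ v ∈ I, u ≠ v → g (φ u).1 (φ v).2 ≠ g (φ v).1 (φ u).2) :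
    Set.InjOn φ I := by
  intro u hu v hv huv
  by_contra hne
  exact h u hu v hv hne (by rw [huv])

lemma isFoolingSet_image [DecidableEq (α × β)]
    (h : ∀ u ∈ I, ∀ v ∈ I, u ≠ v → g (φ u).1 (φ v).2 ≠ g (φ v).1 (φ u).2) :
    IsFoolingSet g (I.image φ) := by
  simp only [IsFoolingSet, mem_image]
  rintro _ ⟨u, hu, rfl⟩ _ ⟨v, hv, rfl⟩ hne
  exact h u hu v hv fun huv => hne (by rw [huv])

end FoolingImage

lemma Nat.testBit_eq_decide_lt_of_add_eq {m a b T : ℕ} (ha : a < 2 ^ m)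
    (h : T + b = 2 ^ m - 1 + a) : T.testBit m = decide (b < a) := by
  have := Nat.one_le_two_pow (n := m)
  by_cases hab : b < a
  · obtain ⟨c, rfl⟩ : ∃ c, T = 2 ^ m + c := ⟨T - 2 ^ m, by omega⟩
    rw [Nat.testBit_two_pow_add_eq, Nat.testBit_lt_two_pow (by omega)]
    simp [hab]
  · rw [Nat.testBit_lt_two_pow (by omega)]
    simp [hab]

lemma bitVal_comp_val {n : ℕ} (g : ℕ → Bool) :
    bitVal (fun i : Fin n => g i) = ∑ i ∈ range n, if g i then 2 ^ i else 0 :=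
  Fin.sum_univ_eq_sum_range (fun i => if g i then 2 ^ i else 0) n

section SplitPositions
variable (P : Finset (ℕ × Bool)) (n d : ℕ)

def splitPositions : Finset ℕ :=
  (range (n - 1)).filter fun i => i + d < n ∧ ((i, false) ∈ P ↔ (i + d, true) ∉ P)

def labelBit (U V : Finset ℕ) (x : ℕ × Bool) (i : ℕ) : Bool :=
  if x ∈ P then decide (i ∈ U) else decide (i ∉ V)

def labelAssignment (U V : Finset ℕ) : ℕ × Bool → Bool
  | (i, false) =>
    if i ∈ splitPositions P n d then labelBit P U V (i, false) i else decide (i + 1 < n)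
  | (j, true) =>
    if d ≤ j ∧ j - d ∈ splitPositions P n d then labelBit P U V (j, true) (j - d) else false

variable {P n d}

lemma labelAssignment_eq_ite (U V : Finset ℕ) (x : ℕ × Bool) :
    labelAssignment P n d U V x =
      if x ∈ P then labelAssignment P n d U U x else labelAssignment P n d V V x := by
  obtain ⟨i, _ | _⟩ := x <;> simp only [labelAssignment, labelBit] <;> split_ifs <;> rfl

variable (U V : Finset ℕ)

lemma sum_labelAssignment_false :
    ∑ i ∈ range n, (if labelAssignment P n d U V (i, false) then 2 ^ i else 0) =
      ∑ i ∈ range (n - 1) \ splitPositions P n d, 2 ^ i +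
        ∑ i ∈ splitPositions P n d,
          if labelAssignment P n d U V (i, false) then 2 ^ i else 0 := by
  have hS : splitPositions P n d ⊆ range n :=
    (filter_subset _ _).trans (range_subset_range.2 (Nat.sub_le n 1))
  rw [← sum_sdiff hS]
  congr 1
  calc _ = ∑ i ∈ range n \ splitPositions P n d, if i + 1 < n then 2 ^ i else 0 :=
        sum_congr rfl fun i hi => by simp [labelAssignment, (mem_sdiff.1 hi).2]
    _ = _ := by
        rw [← sum_filter]
        congr 1
        ext i
        simp only [mem_filter, mem_sdiff, mem_range]
        exact ⟨fun h => ⟨by omega, h.1.2⟩, fun h => ⟨⟨by omega, h.2⟩, by omega⟩⟩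

lemma sum_labelAssignment_true :
    ∑ j ∈ range n, (if labelAssignment P n d U V (j, true) then 2 ^ j else 0) =
      2 ^ d * ∑ i ∈ splitPositions P n d,
        if labelAssignment P n d U V (i + d, true) then 2 ^ i else 0 := by
  have hsub : (splitPositions P n d).map (addRightEmbedding d) ⊆ range n := by
    intro j hj
    obtain ⟨i, hi, rfl⟩ := mem_map.1 hj
    exact mem_range.2 (mem_filter.1 hi).2.1
  have hzero : ∀ j ∈ range n, j ∉ (splitPositions P n d).map (addRightEmbedding d) →
      (if labelAssignment P n d U V (j, true) then 2 ^ j else 0) = 0 := by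
    intro j _ hj
    have : ¬(d ≤ j ∧ j - d ∈ splitPositions P n d) := fun h =>
      hj (mem_map.2 ⟨j - d, h.2, by simp [Nat.sub_add_cancel h.1]⟩)
    simp [labelAssignment, this]
  rw [← sum_subset hsub hzero, sum_map, mul_sum]
  refine sum_congr rfl fun i _ => ?_
  rw [addRightEmbedding_apply]
  split_ifs <;> simp [pow_add, mul_comm]

lemma labelAssignment_add_eq {i : ℕ} (hi : i ∈ splitPositions P n d) :
    (if labelAssignment P n d U V (i, false) then 2 ^ i else 0) +
        (if labelAssignment P n d U V (i + d, true) then 2 ^ i else 0) =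
      (if i ∈ U then 2 ^ i else 0) + (if i ∈ V then 0 else 2 ^ i) := by
  have hsplit := (mem_filter.1 hi).2.2
  by_cases hP : (i, false) ∈ P
  · have : (i + d, true) ∉ P := hsplit.1 hP
    simp [labelAssignment, labelBit, hi, hP, this]
  · have : (i + d, true) ∈ P := by tauto
    rw [add_comm]
    simp [labelAssignment, labelBit, hi, hP, this]

lemma labelAssignment_value_add {U V : Finset ℕ} (hU : U ⊆ splitPositions P n d)
    (hV : V ⊆ splitPositions P n d) :
    (∑ i ∈ range n, (if labelAssignment P n d U V (i, false) then 2 ^ i else 0)) +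
        (∑ j ∈ range n, (if labelAssignment P n d U V (j, true) then 2 ^ j else 0)) / 2 ^ d +
        ∑ i ∈ V, 2 ^ i =
      2 ^ (n - 1) - 1 + ∑ i ∈ U, 2 ^ i := by
  rw [sum_labelAssignment_false, sum_labelAssignment_true,
    Nat.mul_div_cancel_left _ (Nat.two_pow_pos d)]
  have hS : splitPositions P n d ⊆ range (n - 1) := filter_subset _ _
  set S := splitPositions P n d
  have hpairs : ∑ i ∈ S, (if labelAssignment P n d U V (i, false) then 2 ^ i else 0) +
      ∑ i ∈ S, (if labelAssignment P n d U V (i + d, true) then 2 ^ i else 0) =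
      ∑ i ∈ U, 2 ^ i + ∑ i ∈ S, if i ∈ V then 0 else 2 ^ i := by
    rw [← sum_add_distrib, sum_congr rfl fun i hi => labelAssignment_add_eq U V hi,
      sum_add_distrib, sum_ite_mem, inter_eq_right.2 hU]
  have hcompl :
      ∑ i ∈ S, (if i ∈ V then 0 else 2 ^ i) + ∑ i ∈ V, 2 ^ i = ∑ i ∈ S, 2 ^ i := by
    have hV' : ∑ i ∈ V, 2 ^ i = ∑ i ∈ S, if i ∈ V then 2 ^ i else 0 := by
      rw [sum_ite_mem, inter_eq_right.2 hV]
    rw [hV', ← sum_add_distrib]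
    exact sum_congr rfl fun i _ => by split_ifs <;> simp
  have hrange : ∑ i ∈ range (n - 1) \ S, 2 ^ i + ∑ i ∈ S, 2 ^ i = 2 ^ (n - 1) - 1 := by
    rw [sum_sdiff hS, Nat.geomSum_eq le_rfl]
    simp
  omega

lemma testBit_labelAssignment {U V : Finset ℕ} (hU : U ⊆ splitPositions P n d)
    (hV : V ⊆ splitPositions P n d) :
    ((∑ i ∈ range n, (if labelAssignment P n d U V (i, false) then 2 ^ i else 0)) +
        (∑ j ∈ range n, (if labelAssignment P n d U V (j, true) then 2 ^ j else 0)) / 2 ^ d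
      ).testBit (n - 1) = decide (∑ i ∈ V, 2 ^ i < ∑ i ∈ U, 2 ^ i) := by
  refine Nat.testBit_eq_decide_lt_of_add_eq (Nat.geomSum_lt le_rfl fun i hi => ?_)
    (labelAssignment_value_add hU hV)
  exact mem_range.1 (filter_subset _ _ (hU hi))

end SplitPositions

def liftPositions {n : ℕ} (L : Finset (Fin n × Bool)) : Finset (ℕ × Bool) :=
  L.map (Fin.valEmbedding.prodMap (Function.Embedding.refl Bool))

def sAddHighSplit {n : ℕ} (L : Finset (Fin n × Bool)) (D : Fin (n + 1))
    (l : {x // x ∈ L} → Bool) (r : {x // x ∈ Lᶜ} → Bool) : Bool :=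
  sAddHigh (fun i => combine L l r (i, false)) (fun i => combine L l r (i, true)) D

def foolingPair {n : ℕ} (L : Finset (Fin n × Bool)) (d : ℕ) (U : Finset ℕ) :
    ({x // x ∈ L} → Bool) × ({x // x ∈ Lᶜ} → Bool) :=
  (fun x => labelAssignment (liftPositions L) n d U U (x.1.1, x.1.2),
    fun x => labelAssignment (liftPositions L) n d U U (x.1.1, x.1.2))

def foolingSet {n : ℕ} (L : Finset (Fin n × Bool)) (d : ℕ) :
    Finset (({x // x ∈ L} → Bool) × ({x // x ∈ Lᶜ} → Bool)) :=
  (splitPositions (liftPositions L) n d).powerset.image (foolingPair L d)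

section Operands
variable {n d : ℕ} {L : Finset (Fin n × Bool)}

lemma mem_liftPositions {x : Fin n × Bool} : ((x.1 : ℕ), x.2) ∈ liftPositions L ↔ x ∈ L :=
  mem_map' _

lemma fst_lt_of_mem_liftPositions {x : ℕ × Bool} (hx : x ∈ liftPositions L) : x.1 < n := by
  obtain ⟨y, -, rfl⟩ := mem_map.1 hx
  exact y.1.isLt

lemma card_liftPositions : (liftPositions L).card = L.card := card_map _

lemma combine_foolingPair (U V : Finset ℕ) (x : Fin n × Bool) :
    combine L (foolingPair L d U).1 (foolingPair L d V).2 x =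
      labelAssignment (liftPositions L) n d U V (x.1, x.2) := by
  rw [labelAssignment_eq_ite]
  simp only [combine, foolingPair, mem_liftPositions]
  split_ifs <;> rfl

lemma sAddHighSplit_foolingPair (hd : d ≤ n) {U V : Finset ℕ}
    (hU : U ⊆ splitPositions (liftPositions L) n d)
    (hV : V ⊆ splitPositions (liftPositions L) n d) :
    sAddHighSplit L ⟨d, Nat.lt_succ_of_le hd⟩ (foolingPair L d U).1 (foolingPair L d V).2 =
      decide (∑ i ∈ V, 2 ^ i < ∑ i ∈ U, 2 ^ i) := by
  simp only [sAddHighSplit, sAddHigh, combine_foolingPair]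
  rw [bitVal_comp_val (fun i => labelAssignment (liftPositions L) n d U V (i, false)),
    bitVal_comp_val (fun i => labelAssignment (liftPositions L) n d U V (i, true))]
  exact testBit_labelAssignment hU hV

lemma foolingPair_distinguishes (hd : d ≤ n) {U V : Finset ℕ}
    (hU : U ⊆ splitPositions (liftPositions L) n d)
    (hV : V ⊆ splitPositions (liftPositions L) n d)
    (hUV : U ≠ V) :
    sAddHighSplit L ⟨d, Nat.lt_succ_of_le hd⟩ (foolingPair L d U).1 (foolingPair L d V).2 ≠
      sAddHighSplit L ⟨d, Nat.lt_succ_of_le hd⟩ (foolingPair L d V).1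
        (foolingPair L d U).2 := by
  rw [sAddHighSplit_foolingPair hd hU hV, sAddHighSplit_foolingPair hd hV hU]
  have := (Finset.geomSum_injective le_rfl).ne hUV
  simp only [ne_eq, decide_eq_decide] at this ⊢
  omega

lemma isFoolingSet_foolingSet (hd : d ≤ n) :
    IsFoolingSet (sAddHighSplit L ⟨d, Nat.lt_succ_of_le hd⟩) (foolingSet L d) :=
  isFoolingSet_image fun _ hU _ hV hUV =>
    foolingPair_distinguishes hd (mem_powerset.1 hU) (mem_powerset.1 hV) hUV

lemma card_foolingSet (hd : d ≤ n) :
    (foolingSet L d).card = 2 ^ (splitPositions (liftPositions L) n d).card := by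
  rw [foolingSet, card_image_of_injOn (injOn_of_distinguishes fun _ hU _ hV hUV =>
    foolingPair_distinguishes hd (mem_powerset.1 hU) (mem_powerset.1 hV) hUV), card_powerset]

end Operands

-- `(n - k)² > 4 (n - 1) (k - 1)` as soon as `n - k ≥ 7k - 3`.
lemma sub_one_mul_sub_one_lt_mul_self {n k o : ℕ} (hk : 1 ≤ k) (hkn : 8 * k ≤ n + 3)
    (hn : n ≤ 2 * o + k) : (n - 1) * (k - 1) < o * o := by
  obtain ⟨k, rfl⟩ : ∃ k', k = k' + 1 := ⟨k - 1, by omega⟩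
  obtain ⟨n, rfl⟩ : ∃ n', n = n' + 1 := ⟨n - 1, by omega⟩
  simp only [Nat.add_sub_cancel]
  nlinarith

section Counting
variable (P : Finset (ℕ × Bool)) (n : ℕ)

def coveredTwice : Finset ℕ := (range n).filter fun i => (i, false) ∈ P ∧ (i, true) ∈ P

def coveredOnce : Finset ℕ := (range n).filter fun i => ((i, false) ∈ P ↔ (i, true) ∉ P)

def uncovered : Finset ℕ := (range n).filter fun i => (i, false) ∉ P ∧ (i, true) ∉ P

variable {P n}

lemma card_eq_sum_columns (hP : ∀ x ∈ P, x.1 < n) :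
    P.card =
      ∑ i ∈ range n,
        ((if (i, false) ∈ P then 1 else 0) + if (i, true) ∈ P then 1 else 0) := by
  have hsub : P ⊆ range n ×ˢ univ := fun x hx =>
    mem_product.2 ⟨mem_range.2 (hP x hx), mem_univ _⟩
  calc P.card = ((range n ×ˢ univ).filter (· ∈ P)).card := by
        rw [filter_mem_eq_inter, inter_eq_right.2 hsub]
    _ = _ := by
        rw [card_filter, sum_product]
        exact sum_congr rfl fun i _ => by rw [Fintype.sum_bool, add_comm]

lemma two_mul_card_coveredTwice_add (hP : ∀ x ∈ P, x.1 < n) (hcard : P.card = n) :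
    2 * (coveredTwice P n).card + (coveredOnce P n).card = n := by
  refine Eq.trans ?_ hcard
  rw [card_eq_sum_columns hP, coveredTwice, coveredOnce, card_filter, card_filter, mul_sum,
    ← sum_add_distrib]
  refine sum_congr rfl fun i _ => ?_
  by_cases h₀ : (i, false) ∈ P <;> by_cases h₁ : (i, true) ∈ P <;> simp [h₀, h₁]

lemma card_coveredTwice_add_card_uncovered :
    (coveredTwice P n).card + (uncovered P n).card + (coveredOnce P n).card = n := by
  conv_rhs => rw [← card_range n, card_eq_sum_ones]
  rw [coveredTwice, coveredOnce, uncovered, card_filter, card_filter, card_filter,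
    ← sum_add_distrib, ← sum_add_distrib]
  refine sum_congr rfl fun i _ => ?_
  by_cases h₀ : (i, false) ∈ P <;> by_cases h₁ : (i, true) ∈ P <;> simp [h₀, h₁]

lemma card_coveredOnce_le : (coveredOnce P n).card ≤ (splitPositions P n 0).card + 1 := by
  have hsub : coveredOnce P n ⊆ insert (n - 1) (splitPositions P n 0) := by
    intro i hi
    simp only [coveredOnce, mem_filter, mem_range] at hi
    simp only [mem_insert, splitPositions, mem_filter, mem_range, add_zero]
    by_cases h : i = n - 1
    · exact Or.inl h
    · exact Or.inr ⟨by omega, hi.1, hi.2⟩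
  exact (card_le_card hsub).trans (card_insert_le _ _)

-- A pair `(o, z)` of columns at distance `d` yields the split position `min o z` for `d`.
lemma card_coveredTwice_mul_card_uncovered_le :
    (coveredTwice P n).card * (uncovered P n).card ≤
      ∑ d ∈ Icc 1 (n - 1), (splitPositions P n d).card := by
  rw [← card_product, ← card_sigma]
  refine card_le_card_of_injOn (fun p => ⟨max p.1 p.2 - min p.1 p.2, min p.1 p.2⟩) ?_ ?_
  · rintro ⟨o, z⟩ hp
    simp only [coe_product, Set.mem_prod, mem_coe, coveredTwice, uncovered, mem_filter,
      mem_range] at hp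
    obtain ⟨⟨ho, ho₀, ho₁⟩, hz, hz₀, hz₁⟩ := hp
    have hoz : o ≠ z := by rintro rfl; exact hz₀ ho₀
    simp only [mem_coe, mem_sigma, mem_Icc, splitPositions, mem_filter, mem_range]
    rcases lt_or_gt_of_ne hoz with h | h
    · rw [max_eq_right h.le, min_eq_left h.le, Nat.add_sub_cancel' h.le]
      exact ⟨by omega, by omega, by omega, iff_of_true ho₀ hz₁⟩
    · rw [max_eq_left h.le, min_eq_right h.le, Nat.add_sub_cancel' h.le]
      exact ⟨by omega, by omega, by omega, iff_of_false hz₀ (not_not.2 ho₁)⟩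
  · rintro ⟨o, z⟩ hp ⟨o', z'⟩ hq h
    simp only [coe_product, Set.mem_prod, mem_coe, coveredTwice, uncovered, mem_filter,
      mem_range] at hp hq
    simp only [Sigma.mk.inj_iff, heq_iff_eq] at h
    have hne : ∀ a b, (a, false) ∈ P → (b, false) ∉ P → a ≠ b := by
      rintro a _ ha hb rfl
      exact hb ha
    have hoz := hne o z hp.1.2.1 hp.2.2.1
    have hoz' := hne o z' hp.1.2.1 hq.2.2.1
    have ho'z := hne o' z hq.1.2.1 hp.2.2.1
    have ho'z' := hne o' z' hq.1.2.1 hq.2.2.1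
    simp only [Prod.mk.injEq]
    omega

lemma exists_le_card_splitPositions (hP : ∀ x ∈ P, x.1 < n) (hcard : P.card = n) :
    ∃ d ≤ n, (n + 3) / 4 / 2 ≤ (splitPositions P n d).card := by
  set k := (n + 3) / 4 / 2
  by_cases h₀ : k ≤ (splitPositions P n 0).card
  · exact ⟨0, n.zero_le, h₀⟩
  have htwice := two_mul_card_coveredTwice_add hP hcard
  have hcover := card_coveredTwice_add_card_uncovered (P := P) (n := n)
  have honce := card_coveredOnce_le (P := P) (n := n)
  have hlt :
      ∑ _d ∈ Icc 1 (n - 1), (k - 1) < ∑ d ∈ Icc 1 (n - 1), (splitPositions P n d).card := by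
    rw [sum_const, Nat.card_Icc, smul_eq_mul, Nat.add_sub_cancel]
    calc (n - 1) * (k - 1)
        < (coveredTwice P n).card * (coveredTwice P n).card :=
          sub_one_mul_sub_one_lt_mul_self (by omega) (by omega) (by omega)
      _ = (coveredTwice P n).card * (uncovered P n).card := by congr 1; omega
      _ ≤ _ := card_coveredTwice_mul_card_uncovered_le
  obtain ⟨d, hd, hkd⟩ := exists_lt_of_sum_lt hlt
  exact ⟨d, by have := (mem_Icc.1 hd).2; omega, by omega⟩

end Counting

theorem stmt_12_general (n : ℕ) (L : Finset (Fin n × Bool)) (hL : L.card = n) :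
    ∃ D : Fin (n + 1),
      ∃ 𝒜 : Finset (({x // x ∈ L} → Bool) × ({x // x ∈ Lᶜ} → Bool)),
        𝒜.card ≥ 2 ^ (((n + 3) / 4) / 2) ∧
        ∀ p ∈ 𝒜, ∀ q ∈ 𝒜, p ≠ q →
          sAddHigh (fun i => combine L p.1 q.2 (i, false))
              (fun i => combine L p.1 q.2 (i, true)) D
          ≠ sAddHigh (fun i => combine L q.1 p.2 (i, false))
              (fun i => combine L q.1 p.2 (i, true)) D := by
  obtain ⟨d, hd, hk⟩ := exists_le_card_splitPositions (fun _ => fst_lt_of_mem_liftPositions)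
    (card_liftPositions.trans hL)
  refine ⟨⟨d, Nat.lt_succ_of_le hd⟩, foolingSet L d, ?_, isFoolingSet_foolingSet hd⟩
  rw [ge_iff_le, card_foolingSet hd]
  exact Nat.pow_le_pow_right two_pos hk

theorem stmt_12 (n : ℕ) (hn : 4 ≤ n) (L : Finset (Fin n × Bool)) (hL : L.card = n) :
    ∃ D : Fin (n + 1),
      ∃ 𝒜 : Finset (({x // x ∈ L} → Bool) × ({x // x ∈ Lᶜ} → Bool)),
        𝒜.card ≥ 2 ^ (((n + 3) / 4) / 2) ∧
        ∀ p ∈ 𝒜, ∀ q ∈ 𝒜, p ≠ q →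
          sAddHigh (fun i => combine L p.1 q.2 (i, false))
              (fun i => combine L p.1 q.2 (i, true)) D
          ≠ sAddHigh (fun i => combine L q.1 p.2 (i, false))
              (fun i => combine L q.1 p.2 (i, true)) D :=
  stmt_12_general n L hL
end

section
/- Let n ≥ 4 and let sAdd^n_{n−1}(A, B, D) be bit n−1 of val(A) + val(B)/2^D as above. Then every ordered binary decision diagram computing sAdd^n_{n−1} (over the 2n operand variables, for any fixed ordering of these variables, with D-bits placed anywhere) has at least 2^{n/8} nodes. Abstractly: for any bijective enumeration π of the 2n operand variables, letting L be the first n variables under π, any function h from assignments of L to a finite set of size N such that h(l) = h(l') implies equal function values for all completions must have N ≥ 2^{n/8}. -/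
open Finset
open scoped symmDiff

lemma bitVal_eq_ofBits {n : ℕ} (w : Fin n → Bool) : bitVal w = Nat.ofBits w := by
  induction n with
  | zero => simp [bitVal]
  | succ n ih =>
    rw [Nat.ofBits_succ, ← ih, bitVal, bitVal, Fin.sum_univ_succ, Finset.mul_sum]
    cases w 0 <;> simp [pow_succ, mul_comm, add_comm, apply_ite (2 * ·)]

lemma bitVal_eq_sum_range (a : ℕ → Bool) (n : ℕ) :
    bitVal (fun i : Fin n => a i) = ∑ i ∈ range n, (a i).toNat * 2 ^ i := by
  rw [bitVal, Fin.sum_univ_eq_sum_range (fun i => if a i then 2 ^ i else 0)]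
  refine sum_congr rfl fun i _ => ?_
  cases a i <;> simp

lemma testBit_bitVal (a : ℕ → Bool) (n k : ℕ) :
    (bitVal (fun i : Fin n => a i)).testBit k = (decide (k < n) && a k) := by
  rw [bitVal_eq_ofBits, Nat.testBit_ofBits]
  split_ifs with hk <;> simp [hk]

lemma bitVal_div_two_pow (b : ℕ → Bool) (n d : ℕ) :
    bitVal (fun i : Fin n => b i) / 2 ^ d =
      bitVal (fun i : Fin n => decide (i + d < n) && b (i + d)) :=
  Nat.eq_of_testBit_eq fun k => by
    rw [Nat.testBit_div_two_pow, testBit_bitVal,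
      testBit_bitVal (fun j => decide (j + d < n) && b (j + d))]
    by_cases hk : k + d < n
    · simp [hk, show k < n by omega]
    · simp [hk]

lemma sAddHigh_eq_testBit_sum (a b : ℕ → Bool) {n : ℕ} (D : Fin (n + 1)) :
    sAddHigh (fun i : Fin n => a i) (fun i => b i) D =
      (∑ i ∈ range n, ((a i).toNat + (decide (i + D < n) && b (i + D)).toNat) * 2 ^ i).testBit
        (n - 1) := by
  rw [sAddHigh, bitVal_div_two_pow, bitVal_eq_sum_range,
    bitVal_eq_sum_range (fun j => decide (j + D < n) && b (j + D)), ← sum_add_distrib]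
  simp only [add_mul]

lemma sum_range_mul_two_pow_lt {t : ℕ → ℕ} {m : ℕ} (ht : ∀ i < m, t i ≤ 1) :
    ∑ i ∈ range m, t i * 2 ^ i < 2 ^ m :=
  calc ∑ i ∈ range m, t i * 2 ^ i ≤ ∑ i ∈ range m, 2 ^ i :=
        sum_le_sum fun i hi => mul_le_of_le_one_left (Nat.zero_le _) (ht i (mem_range.mp hi))
    _ < 2 ^ m := Nat.geomSum_lt le_rfl fun _ => mem_range.mp

/-- The carry `c` out of column `p` ripples through all higher columns and decides bit `n - 1`. -/
lemma testBit_sum_carry_chain {t : ℕ → ℕ} {n p : ℕ} (c : Bool) (hpn : p < n)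
    (hlow : ∀ i < p, t i ≤ 1) (hp : t p = 1 + c.toNat) (hhigh : ∀ i, p < i → i < n → t i = 1) :
    (∑ i ∈ range n, t i * 2 ^ i).testBit (n - 1) = !c := by
  set low := ∑ i ∈ range p, t i * 2 ^ i
  have hlow_lt : low < 2 ^ p := sum_range_mul_two_pow_lt hlow
  have hprefix : ∀ m, p < m → m ≤ n →
      ∑ i ∈ range m, t i * 2 ^ i + 2 ^ p = low + 2 ^ m + c.toNat * 2 ^ p := by
    intro m hpm hmn
    induction m, hpm using Nat.le_induction with
    | base => rw [sum_range_succ, hp, pow_succ]; ring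
    | succ m hpm ih =>
      rw [sum_range_succ, hhigh m hpm (by omega), pow_succ]
      linarith [ih (by omega)]
  have hpow : 2 ^ p ≤ 2 ^ (n - 1) := Nat.pow_le_pow_right two_pos (by omega)
  have hn : 2 ^ n = 2 ^ (n - 1) + 2 ^ (n - 1) := by
    rw [← two_mul, ← pow_succ']
    congr
    omega
  have htotal := hprefix n hpn le_rfl
  set S := ∑ i ∈ range n, t i * 2 ^ i
  cases c
  · rw [Bool.toNat_false, zero_mul, add_zero] at htotal
    obtain ⟨x, hx⟩ := Nat.exists_eq_add_of_le (show 2 ^ (n - 1) ≤ S by omega)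
    rw [hx, Nat.testBit_two_pow_add_eq, Nat.testBit_lt_two_pow (by omega)]
  · rw [Bool.toNat_true, one_mul] at htotal
    rw [show S = 2 ^ n + low by omega, Nat.testBit_two_pow_add_gt (by omega),
      Nat.testBit_lt_two_pow (by omega)]
    rfl

/-- The columns `i` of `A + ⌊B / 2^d⌋` split by the cut, where `F` and `G` are the positions of
the bits of `A` and of `B` on the first side. -/
def splitSet (n : ℕ) (F G : Finset ℕ) (d : ℕ) : Finset ℕ :=
  (range n).filter fun i => i + d < n ∧ (i ∈ F ↔ i + d ∉ G)

lemma mem_splitSet {n d i : ℕ} {F G : Finset ℕ} :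
    i ∈ splitSet n F G d ↔ i + d < n ∧ (i ∈ F ↔ i + d ∉ G) := by
  simp only [splitSet, mem_filter, mem_range, and_iff_right_iff_imp]
  omega

lemma card_mul_card_le_sum_card_splitSet {n : ℕ} {F G E₀ E₁ : Finset ℕ}
    (hE₀ : ∀ i ∈ E₀, i < n ∧ i ∉ F ∧ i ∉ G) (hE₁ : ∀ j ∈ E₁, j < n ∧ j ∈ F ∧ j ∈ G) :
    #E₀ * #E₁ ≤ ∑ d ∈ range n, #(splitSet n F G d) := by
  rw [← card_product, ← card_sigma]
  refine card_le_card_of_injOn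
    (fun q => if q.1 < q.2 then ⟨q.2 - q.1, q.1⟩ else ⟨q.1 - q.2, q.2⟩) ?_ ?_
  · rintro ⟨i, j⟩ hij
    simp only [coe_product, Set.mem_prod, mem_coe] at hij
    obtain ⟨hi, hiF, hiG⟩ := hE₀ i hij.1
    obtain ⟨hj, hjF, hjG⟩ := hE₁ j hij.2
    have hne : i ≠ j := by rintro rfl; exact hiF hjF
    dsimp only
    split_ifs with hlt
    · simp [mem_splitSet, Nat.add_sub_cancel' hlt.le, *]; omega
    · simp [mem_splitSet, Nat.add_sub_cancel' (show j ≤ i by omega), *]; omega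
  · rintro ⟨i, j⟩ hij ⟨i', j'⟩ hij' heq
    simp only [coe_product, Set.mem_prod, mem_coe] at hij hij'
    have hne : ∀ a ∈ E₀, ∀ b ∈ E₁, a ≠ b := fun a ha b hb hab =>
      (hE₀ a ha).2.1 (hab ▸ (hE₁ b hb).2.1)
    have := hne i hij.1 j hij.2
    have := hne i hij.1 j' hij'.2
    have := hne i' hij'.1 j hij.2
    have := hne i' hij'.1 j' hij'.2
    dsimp only at heq
    split_ifs at heq <;> simp only [Sigma.mk.injEq, heq_eq_eq] at heq <;>
      simp only [Prod.mk.injEq] <;> omega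

lemma exists_le_card_splitSet {n : ℕ} {F G : Finset ℕ} (hF : F ⊆ range n) (hG : G ⊆ range n)
    (hFG : #F + #G = n) : ∃ d ≤ n, n / 8 ≤ #(splitSet n F G d) := by
  by_cases hdiag : n / 8 ≤ #(splitSet n F G 0)
  · exact ⟨0, Nat.zero_le n, hdiag⟩
  have hsplit₀ : splitSet n F G 0 = (F ∪ G) \ (F ∩ G) := by
    ext i
    have hFi := @hF i
    have hGi := @hG i
    simp only [mem_splitSet, add_zero, mem_sdiff, mem_union, mem_inter, mem_range] at hFi hGi ⊢
    tauto
  have hunion := card_union_add_card_inter F G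
  have hdiag_card : #(splitSet n F G 0) + 2 * #(F ∩ G) = n := by
    rw [hsplit₀, card_sdiff_of_subset inter_subset_union]
    have := card_le_card (inter_subset_union (s := F) (t := G))
    omega
  have houtside : #(range n \ (F ∪ G)) = #(F ∩ G) := by
    rw [card_sdiff_of_subset (union_subset hF hG), card_range]
    omega
  have hpairs := card_mul_card_le_sum_card_splitSet (E₀ := range n \ (F ∪ G)) (E₁ := F ∩ G)
    (fun i hi => by simp_all)
    (fun j hj => ⟨mem_range.mp (hF (mem_inter.mp hj).1), mem_inter.mp hj⟩)
  have hmany : ∑ _d ∈ range n, n / 8 ≤ ∑ d ∈ range n, #(splitSet n F G d) := by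
    rw [sum_const, card_range, smul_eq_mul]
    refine le_trans ?_ hpairs
    rw [houtside]
    nlinarith [Nat.div_mul_le_self n 8]
  obtain ⟨d, hd, hle⟩ := exists_le_of_sum_le (nonempty_range_iff.mpr (by omega)) hmany
  exact ⟨d, (mem_range.mp hd).le, hle⟩

def sideSet {n : ℕ} (L : Finset (Fin n × Bool)) (b : Bool) : Finset ℕ :=
  (univ.filter fun i : Fin n => (i, b) ∈ L).map Fin.valEmbedding

lemma mem_sideSet {n : ℕ} {L : Finset (Fin n × Bool)} {b : Bool} {i : Fin n} :
    (i : ℕ) ∈ sideSet L b ↔ (i, b) ∈ L := by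
  simp [sideSet, Fin.val_inj]

lemma sideSet_subset_range {n : ℕ} (L : Finset (Fin n × Bool)) (b : Bool) :
    sideSet L b ⊆ range n := by
  intro i
  simp only [sideSet, mem_map, Fin.valEmbedding_apply, mem_range]
  rintro ⟨i, -, rfl⟩
  exact i.isLt

lemma card_sideSet_add_card_sideSet {n : ℕ} (L : Finset (Fin n × Bool)) :
    #(sideSet L false) + #(sideSet L true) = #L := by
  rw [sideSet, sideSet, card_map, card_map, card_filter, card_filter, ← sum_add_distrib]
  conv_rhs => rw [← filter_univ_mem L, card_filter, Fintype.sum_prod_type]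
  simp only [Fintype.sum_bool]
  exact sum_congr rfl fun i _ => add_comm _ _

lemma card_filter_equiv_val_lt {α : Type*} [Fintype α] {m : ℕ} (e : α ≃ Fin m) (k : ℕ) :
    #{x | (e x : ℕ) < k} = min m k := by
  rw [← Fin.card_filter_val_lt]
  exact card_equiv e (by simp)

/-- An input on the bits `(j, false) = A_j`, `(j, true) = B_j`: both variables `A_i`, `B_{i+d}`
of a column `i ∈ I` get the value `f i`, the other columns get `A_i = 1` and `B_{i+d} = 0`. -/
def columnInput (I : Finset ℕ) (d : ℕ) (f : ℕ → Bool) (j : ℕ) : Bool → Bool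
  | false => if j ∈ I then f j else true
  | true => if d ≤ j ∧ j - d ∈ I then f (j - d) else false

def chainPattern (p : ℕ) (g : ℕ → Bool) (i : ℕ) : Bool :=
  if i < p then false else if i = p then true else !g i

lemma columnInput_column_sum {n d : ℕ} {F G I : Finset ℕ} (hI : ∀ i ∈ I, i + d < n ∧ (i ∈ F ↔ i + d ∉ G))
    (f g : ℕ → Bool) (i : ℕ) :
    (F.piecewise (columnInput I d f · false) (columnInput I d g · false) i).toNat +
      (decide (i + d < n) &&
        G.piecewise (columnInput I d f · true) (columnInput I d g · true) (i + d)).toNat =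
      if i ∈ I then (f i).toNat + (g i).toNat else 1 := by
  by_cases hi : i ∈ I
  · obtain ⟨hin, hsplit⟩ := hI i hi
    by_cases hF : i ∈ F
    · simp [columnInput, piecewise, hi, hin, hF, hsplit.mp hF]
    · have hG : i + d ∈ G := not_not.mp (mt hsplit.mpr hF)
      simp [columnInput, piecewise, hi, hin, hF, hG, Nat.add_comm (g i).toNat]
  · simp [columnInput, piecewise, hi]

lemma combine_columnInput {n d : ℕ} (L : Finset (Fin n × Bool)) (I : Finset ℕ) (f g : ℕ → Bool)
    (i : Fin n) (b : Bool) :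
    combine L (fun v => columnInput I d f v.1.1 v.1.2) (fun v => columnInput I d g v.1.1 v.1.2)
        (i, b) = (sideSet L b).piecewise (columnInput I d f · b) (columnInput I d g · b) i := by
  by_cases h : (i, b) ∈ L <;> simp [combine, piecewise, mem_sideSet, h]

lemma sAddHigh_combine_columnInput {n p : ℕ} {D : Fin (n + 1)} {L : Finset (Fin n × Bool)}
    {I : Finset ℕ} (hI : ∀ i ∈ I, i + D < n ∧ (i ∈ sideSet L false ↔ i + D ∉ sideSet L true))
    (hp : p ∈ I) {f g : ℕ → Bool} (hfg : ∀ i ∈ I, p < i → f i = g i) :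
    sAddHigh
      (fun i => combine L (fun v => columnInput I D f v.1.1 v.1.2)
        (fun v => columnInput I D (chainPattern p g) v.1.1 v.1.2) (i, false))
      (fun i => combine L (fun v => columnInput I D f v.1.1 v.1.2)
        (fun v => columnInput I D (chainPattern p g) v.1.1 v.1.2) (i, true)) D = !f p := by
  simp only [combine_columnInput]
  rw [sAddHigh_eq_testBit_sum, sum_congr rfl fun i _ => by rw [columnInput_column_sum hI]]
  refine testBit_sum_carry_chain (p := p) (f p)
    ((Nat.le_add_right p D).trans_lt (hI p hp).1) (fun i hi => ?_) ?_ (fun i hpi hin => ?_)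
  · split_ifs
    · simpa [chainPattern, hi] using Bool.toNat_le (f i)
    · exact le_rfl
  · simp [hp, chainPattern, add_comm]
  · split_ifs with hiI
    · rw [chainPattern, if_neg (by omega), if_neg hpi.ne', ← hfg i hiI hpi]
      cases f i <;> rfl
    · rfl

lemma Finset.exists_max_mem_symmDiff {α : Type*} [LinearOrder α] {s t : Finset α} (h : s ≠ t) :
    ∃ a ∈ s ∆ t, ∀ b, a < b → (b ∈ s ↔ b ∈ t) := by
  refine ⟨_, max'_mem _ (symmDiff_nonempty.mpr h), fun b hb => ?_⟩
  have : b ∉ s ∆ t := fun hb' => (le_max' _ b hb').not_gt hb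
  rw [mem_symmDiff] at this
  tauto

lemma two_pow_card_le_of_splitColumns {n N : ℕ} {D : Fin (n + 1)} {L : Finset (Fin n × Bool)}
    {I : Finset ℕ} (hI : ∀ i ∈ I, i + D < n ∧ (i ∈ sideSet L false ↔ i + D ∉ sideSet L true))
    (h : ({x // x ∈ L} → Bool) → Fin N)
    (hh : ∀ l l', h l = h l' → ∀ r : {x // x ∈ Lᶜ} → Bool,
      sAddHigh (fun i => combine L l r (i, false)) (fun i => combine L l r (i, true)) D
        = sAddHigh (fun i => combine L l' r (i, false)) (fun i => combine L l' r (i, true)) D) :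
    2 ^ #I ≤ N := by
  have hinj : Set.InjOn (fun T => h fun v => columnInput I D (· ∈ T) v.1.1 v.1.2)
      (I.powerset : Set (Finset ℕ)) := by
    intro T hT T' hT' hTT'
    by_contra hne
    obtain ⟨p, hpTT', habove⟩ := exists_max_mem_symmDiff hne
    have hpI : p ∈ I := union_subset (mem_powerset.mp hT) (mem_powerset.mp hT')
      (symmDiff_subset_union hpTT')
    have := hh _ _ hTT' (fun v => columnInput I D (chainPattern p (· ∈ T)) v.1.1 v.1.2)
    rw [sAddHigh_combine_columnInput hI hpI (fun _ _ _ => rfl),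
      sAddHigh_combine_columnInput hI hpI (fun i _ hpi => by simp [habove i hpi])] at this
    have hsame : p ∈ T ↔ p ∈ T' := by simpa using Bool.not_inj this
    rw [mem_symmDiff] at hpTT'
    tauto
  calc 2 ^ #I = #I.powerset := (card_powerset I).symm
    _ ≤ #(univ : Finset (Fin N)) := card_le_card_of_injOn _ (fun _ _ => mem_univ _) hinj
    _ = N := card_fin N

theorem stmt_13_general (n N : ℕ)
    (π : Fin (2 * n) ≃ (Fin n × Bool))
    (L : Finset (Fin n × Bool))
    (hLdef : L = Finset.univ.filter (fun x => ((π.symm x : Fin (2 * n)) : ℕ) < n))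
    (h : ({x // x ∈ L} → Bool) → Fin N)
    (hh : ∀ l l', h l = h l' → ∀ (r : {x // x ∈ Lᶜ} → Bool) (D : Fin (n + 1)),
      sAddHigh (fun i => combine L l r (i, false))
          (fun i => combine L l r (i, true)) D
        = sAddHigh (fun i => combine L l' r (i, false))
            (fun i => combine L l' r (i, true)) D) :
    N ≥ 2 ^ (n / 8) := by
  have hL : #L = n := by
    rw [hLdef, card_filter_equiv_val_lt π.symm]
    omega
  obtain ⟨d, hdn, hcard⟩ := exists_le_card_splitSet (sideSet_subset_range L false)
    (sideSet_subset_range L true) (by rw [card_sideSet_add_card_sideSet, hL])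
  let D : Fin (n + 1) := ⟨d, Nat.lt_succ_of_le hdn⟩
  calc 2 ^ (n / 8) ≤ 2 ^ #(splitSet n (sideSet L false) (sideSet L true) d) :=
        Nat.pow_le_pow_right two_pos hcard
    _ ≤ N := two_pow_card_le_of_splitColumns (D := D) (fun i hi => mem_splitSet.mp hi) h
        fun l l' hl r => hh l l' hl r D

theorem stmt_13 (n N : ℕ) (hn : 4 ≤ n)
    (π : Fin (2 * n) ≃ (Fin n × Bool))
    (L : Finset (Fin n × Bool))
    (hLdef : L = Finset.univ.filter (fun x => ((π.symm x : Fin (2 * n)) : ℕ) < n))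
    (h : ({x // x ∈ L} → Bool) → Fin N)
    (hh : ∀ l l', h l = h l' → ∀ (r : {x // x ∈ Lᶜ} → Bool) (D : Fin (n + 1)),
      sAddHigh (fun i => combine L l r (i, false))
          (fun i => combine L l r (i, true)) D
        = sAddHigh (fun i => combine L l' r (i, false))
            (fun i => combine L l' r (i, true)) D) :
    N ≥ 2 ^ (n / 8) :=
  stmt_13_general n N π L hLdef h hh
end
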